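/- arXiv:2108.03188 — 3 statements merged into one kernel-verified Lean document; each statement's English description precedes it below -/
import Mathlib

section
/- For a vertex-weighted graph (G,w) and any non-loop edge e of G, the chromatic symmetric function satisfies the deletion-contraction relation X_{(G,w)} = X_{(G∖e, w)} − X_{(G/e, w/e)}. -/
open scoped Classical
open Finset

structure WGraph where
  V : Type
  E : Type
  [fV : Fintype V]
  [fE : Fintype E]
  ends : E → Sym2 V
  w : V → ℕ
  wpos : ∀ v, 0 < w v

attribute [instance] WGraph.fV WGraph.fE

namespace WGraph

variable (G : WGraph)

/-- The monomial (exponent vector) attached to a colouring. -/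
noncomputable def mono (κ : G.V → ℕ) : ℕ →₀ ℕ := ∑ v : G.V, Finsupp.single (κ v) (G.w v)

/-- A colouring is proper if the endpoints of every edge receive distinct colours. -/
def Proper {C : Type} (κ : G.V → C) : Prop := ∀ e : G.E, ¬ ((G.ends e).map κ).IsDiag

noncomputable def colorings (d : ℕ →₀ ℕ) : Finset (G.V → ℕ) :=
  (Fintype.piFinset fun _ : G.V => d.support).filter (fun κ => G.mono κ = d)

/-- The chromatic symmetric function of a vertex-weighted graph. -/
noncomputable def X (R : Type) [CommRing R] : MvPowerSeries ℕ R :=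
  fun d => (((G.colorings d).filter (fun κ => G.Proper κ)).card : R)

end WGraph
namespace WGraph

/-- Deletion of an edge. -/
noncomputable def deleteEdge (G : WGraph) (e : G.E) : WGraph where
  V := G.V
  E := {f : G.E // f ≠ e}
  ends f := G.ends f.1
  w := G.w
  wpos := G.wpos

/-- Contraction of a non-loop edge `e` with endpoints `u ≠ v`:
the vertex `v` is removed and merged into `u`, whose weight becomes `w u + w v`. -/
noncomputable def contract (G : WGraph) (e : G.E) (u v : G.V) (huv : u ≠ v) : WGraph where
  V := {x : G.V // x ≠ v}
  E := {f : G.E // f ≠ e}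
  ends f := (G.ends f.1).map (fun x => if h : x = v then ⟨u, huv⟩ else ⟨x, h⟩)
  w x := if x.1 = u then G.w u + G.w v else G.w x.1
  wpos x := by
    try dsimp only
    split
    · first
      | exact Nat.add_pos_left (G.wpos u) _
      | have := G.wpos u; omega
    · exact G.wpos _

lemma mono_ge (G : WGraph) (κ : G.V → ℕ) (x : G.V) : G.w x ≤ G.mono κ (κ x) := by
  classical
  rw [mono, Finsupp.finset_sum_apply]
  calc G.w x = (Finsupp.single (κ x) (G.w x)) (κ x) := by simp
  _ ≤ ∑ y : G.V, (Finsupp.single (κ y) (G.w y)) (κ x) :=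
      Finset.single_le_sum (f := fun y => (Finsupp.single (κ y) (G.w y)) (κ x))
        (fun i _ => Nat.zero_le _) (Finset.mem_univ x)

lemma mem_colorings (G : WGraph) (d : ℕ →₀ ℕ) (κ : G.V → ℕ) :
    κ ∈ G.colorings d ↔ G.mono κ = d := by
  constructor
  · intro h; exact (Finset.mem_filter.mp h).2
  · intro h
    refine Finset.mem_filter.mpr ⟨?_, h⟩
    rw [Fintype.mem_piFinset]
    intro x
    rw [Finsupp.mem_support_iff, ← h]
    have h1 := G.mono_ge κ x
    have h2 := G.wpos x
    omega

lemma mono_contract (G : WGraph) (e : G.E) (u v : G.V) (huv : u ≠ v)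
    (κ : G.V → ℕ) (hκ : κ u = κ v) :
    (G.contract e u v huv).mono (fun x => κ x.1) = G.mono κ := by
  classical
  show (∑ x : {x : G.V // x ≠ v}, Finsupp.single (κ x.1)
      (if x.1 = u then G.w u + G.w v else G.w x.1)) = ∑ x : G.V, Finsupp.single (κ x) (G.w x)
  have hsub : (∑ x : {x : G.V // x ≠ v}, Finsupp.single (κ x.1)
      (if x.1 = u then G.w u + G.w v else G.w x.1))
      = ∑ x ∈ Finset.univ.erase v, Finsupp.single (κ x)
          (if x = u then G.w u + G.w v else G.w x) :=
    (Finset.sum_subtype (Finset.univ.erase v) (fun x => by simp)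
      (fun x => Finsupp.single (κ x) (if x = u then G.w u + G.w v else G.w x))).symm
  rw [hsub, ← Finset.add_sum_erase Finset.univ _ (Finset.mem_univ v)]
  have hstep : ∀ x ∈ Finset.univ.erase v,
      Finsupp.single (κ x) (if x = u then G.w u + G.w v else G.w x)
      = Finsupp.single (κ x) (G.w x) + (if x = u then Finsupp.single (κ u) (G.w v) else 0) := by
    intro x _
    by_cases h : x = u <;> simp [h, Finsupp.single_add]
  rw [Finset.sum_congr rfl hstep, Finset.sum_add_distrib, Finset.sum_ite_eq',
    if_pos (Finset.mem_erase.mpr ⟨huv, Finset.mem_univ u⟩), hκ]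
  abel

lemma proper_iff (G : WGraph) (e : G.E) (u v : G.V)
    (he : G.ends e = s(u, v)) (κ : G.V → ℕ) :
    G.Proper κ ↔ (G.deleteEdge e).Proper κ ∧ ¬ κ u = κ v := by
  constructor
  · intro h
    refine ⟨fun f => h f.1, fun hc => h e ?_⟩
    rw [he]
    simp [Sym2.map_pair_eq, hc]
  · rintro ⟨h1, h2⟩ f
    by_cases hf : f = e
    · subst hf
      rw [he]
      simpa [Sym2.map_pair_eq] using h2
    · exact h1 ⟨f, hf⟩

lemma kfix (G : WGraph) (u v : G.V) (huv : u ≠ v)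
    (κ : G.V → ℕ) (hκ : κ u = κ v) (x : G.V) :
    κ (if h : x = v then (⟨u, huv⟩ : {x : G.V // x ≠ v}) else ⟨x, h⟩).1 = κ x := by
  by_cases h : x = v
  · subst h; simp [hκ]
  · simp [h]

lemma proper_contract (G : WGraph) (e : G.E) (u v : G.V) (huv : u ≠ v)
    (κ : G.V → ℕ) (hκ : κ u = κ v) (h : (G.deleteEdge e).Proper κ) :
    (G.contract e u v huv).Proper (fun x => κ x.1) := by
  intro f
  have h1 := h f
  show ¬ (Sym2.map (fun x : {x : G.V // x ≠ v} => κ x.1)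
    (Sym2.map (fun x : G.V => if h : x = v then (⟨u, huv⟩ : {x : G.V // x ≠ v}) else ⟨x, h⟩)
      (G.ends f.1))).IsDiag
  revert h1
  show ¬ (Sym2.map κ (G.ends f.1)).IsDiag → _
  induction (G.ends f.1) using Sym2.ind with
  | _ a b =>
    intro h1 hd
    apply h1
    simp only [Sym2.map_pair_eq, Sym2.mk_isDiag_iff] at hd ⊢
    rw [kfix G u v huv κ hκ, kfix G u v huv κ hκ] at hd
    exact hd

lemma proper_contract' (G : WGraph) (e : G.E) (u v : G.V) (huv : u ≠ v)
    (κ' : (G.contract e u v huv).V → ℕ) (h : (G.contract e u v huv).Proper κ') :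
    (G.deleteEdge e).Proper
      (fun x => κ' (if h : x = v then ⟨u, huv⟩ else ⟨x, h⟩)) := by
  intro f
  have h1 := h f
  revert h1
  show ¬ (Sym2.map κ'
      (Sym2.map (fun x : G.V => if h : x = v then (⟨u, huv⟩ : {x : G.V // x ≠ v}) else ⟨x, h⟩)
        (G.ends f.1))).IsDiag
    → ¬ (Sym2.map (fun x : G.V =>
        κ' (if h : x = v then (⟨u, huv⟩ : {x : G.V // x ≠ v}) else ⟨x, h⟩))
      (G.ends f.1)).IsDiag
  induction (G.ends f.1) using Sym2.ind with
  | _ a b =>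
    intro h1 hd
    apply h1
    simp only [Sym2.map_pair_eq, Sym2.mk_isDiag_iff] at hd ⊢
    exact hd

end WGraph

/-- **Deletion-contraction for the chromatic symmetric function** :
for any non-loop edge `e` with endpoints `u ≠ v`,
`X_{(G,w)} = X_{(G∖e,w)} - X_{(G/e,w/e)}`. -/
theorem chromatic_deletion_contraction (G : WGraph) (e : G.E) (u v : G.V)
    (he : G.ends e = s(u, v)) (huv : u ≠ v) :
    G.X ℤ = (G.deleteEdge e).X ℤ - (G.contract e u v huv).X ℤ := by
  classical
  funext d
  show (((G.colorings d).filter (fun κ => G.Proper κ)).card : ℤ)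
    = ((((G.deleteEdge e).colorings d).filter (fun κ => (G.deleteEdge e).Proper κ)).card : ℤ)
      - ((((G.contract e u v huv).colorings d).filter
          (fun κ => (G.contract e u v huv).Proper κ)).card : ℤ)
  -- Split the deleted-graph proper colorings by whether κ u = κ v
  have hsplit := Finset.card_filter_add_card_filter_not
    (s := ((G.deleteEdge e).colorings d).filter (fun κ => (G.deleteEdge e).Proper κ))
    (p := fun κ => κ u = κ v)
  rw [Finset.filter_filter, Finset.filter_filter] at hsplit
  -- colorings of G with proper = deleted-proper ∧ κ u ≠ κ v
  have h1 : ((G.colorings d).filter (fun κ => G.Proper κ))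
      = (((G.deleteEdge e).colorings d).filter
          (fun κ => (G.deleteEdge e).Proper κ ∧ ¬ κ u = κ v)) := by
    show ((G.colorings d).filter (fun κ => G.Proper κ))
      = ((G.colorings d).filter (fun κ => (G.deleteEdge e).Proper κ ∧ ¬ κ u = κ v))
    exact (Finset.filter_congr (fun κ _ => WGraph.proper_iff G e u v he κ)).trans (by congr)
  -- bijection between deleted-proper with κ u = κ v and contracted proper
  have h2 : ((((G.deleteEdge e).colorings d).filter
        (fun κ => (G.deleteEdge e).Proper κ ∧ κ u = κ v)).card : ℕ)
      = (((G.contract e u v huv).colorings d).filter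
          (fun κ => (G.contract e u v huv).Proper κ)).card := by
    refine Finset.card_bij'
      (fun κ _ => fun x : {x : G.V // x ≠ v} => κ x.1)
      (fun κ' _ => fun x : G.V => κ' (if h : x = v then ⟨u, huv⟩ else ⟨x, h⟩))
      ?_ ?_ ?_ ?_
    · intro κ hκ
      obtain ⟨hc, hp, heq⟩ := Finset.mem_filter.mp hκ
      refine Finset.mem_filter.mpr ⟨?_, WGraph.proper_contract G e u v huv κ heq hp⟩
      refine (WGraph.mem_colorings (G.contract e u v huv) d _).mpr ?_
      exact (WGraph.mono_contract G e u v huv κ heq).trans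
        ((WGraph.mem_colorings (G.deleteEdge e) d κ).mp hc)
    · intro κ' hκ'
      obtain ⟨hc, hp⟩ := Finset.mem_filter.mp hκ'
      set κσ : G.V → ℕ := fun x => κ' (if h : x = v then ⟨u, huv⟩ else ⟨x, h⟩) with hκσ
      have heq : κσ u = κσ v := by rw [hκσ]; simp [huv]
      refine Finset.mem_filter.mpr ⟨?_, WGraph.proper_contract' G e u v huv κ' hp, heq⟩
      refine (WGraph.mem_colorings (G.deleteEdge e) d κσ).mpr ?_
      have hfun : (fun x : {x : G.V // x ≠ v} => κσ x.1) = κ' := by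
        funext x
        rw [hκσ]
        simp [x.2]
      have h3 : (G.contract e u v huv).mono (fun x : {x : G.V // x ≠ v} => κσ x.1) = d := by
        rw [hfun]
        exact (WGraph.mem_colorings (G.contract e u v huv) d κ').mp hc
      exact (WGraph.mono_contract G e u v huv κσ heq).symm.trans h3
    · intro κ hκ
      obtain ⟨hc, hp, heq⟩ := Finset.mem_filter.mp hκ
      funext x
      by_cases h : x = v
      · subst h; simp [heq]
      · simp [h]
    · intro κ' hκ'
      funext x
      simp [x.2]
  have hG := congrArg Finset.card h1
  rw [hG, ← hsplit, h2]
  push_cast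
  ring_nf
  congr
end

section
/- For a vertex-weighted graph (G,w), the chromatic symmetric function has the power-sum expansion X_{(G,w)} = Σ_{S ⊆ E(G)} (−1)^{|S|} p_{λ(S)}, where λ(S) is the integer partition whose parts are the total weights of the connected components of the spanning subgraph (V(G), S). -/
open scoped Classical
open Finset

/-- The power sum symmetric function `p_n = Σ_k x_k^n` (as a power series: it has
coefficient 1 on each monomial `x_k^n`). -/
noncomputable def psum (R : Type) [CommRing R] (n : ℕ) : MvPowerSeries ℕ R :=
  fun d => if ∃ k, d = Finsupp.single k n then 1 else 0

/-- `p_λ = p_{λ₁} ⋯ p_{λ_k}` for a partition `λ` given as a multiset of parts. -/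
noncomputable def pProd (R : Type) [CommRing R] (M : Multiset ℕ) : MvPowerSeries ℕ R :=
  (M.map (psum R)).prod

namespace WGraph

/-- Two vertices are connected in the spanning subgraph `(V(G), S)`. -/
def connRel (G : WGraph) (S : Finset G.E) : G.V → G.V → Prop :=
  Relation.EqvGen (fun x y => ∃ e ∈ S, G.ends e = s(x, y))

/-- `λ(S)`: the multiset of total weights of the connected components of `(V(G), S)`. -/
noncomputable def compWeights (G : WGraph) (S : Finset G.E) : Multiset ℕ :=
  ((Finset.univ : Finset G.V).image
      (fun v => Finset.univ.filter (fun u => G.connRel S v u))).val.map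
    (fun c => ∑ x ∈ c, G.w x)

end WGraph


namespace WGraph

variable (G : WGraph)

noncomputable def cls (S : Finset G.E) (v : G.V) : Finset G.V :=
  Finset.univ.filter (fun u => G.connRel S v u)

noncomputable def comps (S : Finset G.E) : Finset (Finset G.V) :=
  Finset.univ.image (G.cls S)

lemma mem_cls {S : Finset G.E} {v u : G.V} : u ∈ G.cls S v ↔ G.connRel S v u := by
  simp [cls]

lemma connRel_refl (S : Finset G.E) (v : G.V) : G.connRel S v v := Relation.EqvGen.refl v

lemma connRel_symm {S : Finset G.E} {v u : G.V} (h : G.connRel S v u) : G.connRel S u v :=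
  Relation.EqvGen.symm _ _ h

lemma connRel_trans {S : Finset G.E} {v u x : G.V} (h : G.connRel S v u)
    (h' : G.connRel S u x) : G.connRel S v x := Relation.EqvGen.trans _ _ _ h h'

lemma cls_eq {S : Finset G.E} {v u : G.V} (h : G.connRel S v u) : G.cls S v = G.cls S u := by
  ext x
  simp only [mem_cls]
  exact ⟨fun hx => G.connRel_trans (G.connRel_symm h) hx, fun hx => G.connRel_trans h hx⟩

lemma mem_cls_self (S : Finset G.E) (v : G.V) : v ∈ G.cls S v := G.mem_cls.mpr (G.connRel_refl S v)

lemma filter_cls_eq {S : Finset G.E} {c : Finset G.V} (hc : c ∈ G.comps S) :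
    Finset.univ.filter (fun v => G.cls S v = c) = c := by
  obtain ⟨v₀, -, rfl⟩ := Finset.mem_image.mp hc
  ext u
  simp only [Finset.mem_filter, Finset.mem_univ, true_and, mem_cls]
  constructor
  · intro h
    have := G.mem_cls_self S u
    rw [h] at this
    exact G.mem_cls.mp this
  · intro h
    exact (G.cls_eq h).symm

lemma sum_comps {M : Type*} [AddCommMonoid M] (S : Finset G.E) (f : G.V → M) :
    ∑ c ∈ G.comps S, ∑ v ∈ c, f v = ∑ v, f v := by
  rw [← Finset.sum_fiberwise_of_maps_to
    (fun v (_ : v ∈ Finset.univ) => Finset.mem_image_of_mem (G.cls S) (Finset.mem_univ v)) f]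
  exact Finset.sum_congr rfl fun c hc => by rw [G.filter_cls_eq hc]

lemma const_of_diag {S : Finset G.E} {κ : G.V → ℕ}
    (hκ : ∀ e ∈ S, ((G.ends e).map κ).IsDiag) {v u : G.V} (h : G.connRel S v u) : κ v = κ u := by
  induction h with
  | rel x y hxy =>
    obtain ⟨e, he, hxy⟩ := hxy
    have := hκ e he
    rw [hxy, Sym2.map_pair_eq, Sym2.mk_isDiag_iff] at this
    exact this
  | refl => rfl
  | symm _ _ _ ih => exact ih.symm
  | trans _ _ _ _ _ ih1 ih2 => exact ih1.trans ih2

end WGraph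

noncomputable def key (e : ℕ →₀ ℕ) : ℕ := if h : e.support.Nonempty then e.support.min' h else 0

lemma key_single {k n : ℕ} (hn : n ≠ 0) : key (Finsupp.single k n) = k := by
  rw [key, Finsupp.support_single_ne_zero k hn]
  simp

namespace WGraph

variable (G : WGraph)

noncomputable def wt (c : Finset G.V) : ℕ := ∑ x ∈ c, G.w x

noncomputable def toL (S : Finset G.E) (κ : G.V → ℕ) : Finset G.V →₀ (ℕ →₀ ℕ) :=
  ∑ c ∈ G.comps S, Finsupp.single c (∑ v ∈ c, Finsupp.single (κ v) (G.w v))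

lemma toL_apply_mem {S : Finset G.E} {c : Finset G.V} (hc : c ∈ G.comps S) (κ : G.V → ℕ) :
    G.toL S κ c = ∑ v ∈ c, Finsupp.single (κ v) (G.w v) := by
  rw [toL, Finsupp.finset_sum_apply]
  rw [Finset.sum_eq_single_of_mem c hc]
  · rw [Finsupp.single_eq_same]
  · intro b _ hb
    rw [Finsupp.single_eq_of_ne' hb]

lemma toL_apply_not_mem {S : Finset G.E} {c : Finset G.V} (hc : c ∉ G.comps S) (κ : G.V → ℕ) :
    G.toL S κ c = 0 := by
  rw [toL, Finsupp.finset_sum_apply]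
  exact Finset.sum_eq_zero fun b hb => Finsupp.single_eq_of_ne (fun h => hc (h ▸ hb))

lemma const_sum_single {c : Finset G.V} {κ : G.V → ℕ} {k : ℕ} (h : ∀ u ∈ c, κ u = k) :
    ∑ v ∈ c, Finsupp.single (κ v) (G.w v) = Finsupp.single k (G.wt c) := by
  have key : Finsupp.single k (∑ v ∈ c, G.w v) = ∑ v ∈ c, Finsupp.single k (G.w v) :=
    map_sum (Finsupp.singleAddHom k) G.w c
  rw [wt, key]
  exact Finset.sum_congr rfl fun v hv => by rw [h v hv]

lemma wt_pos {S : Finset G.E} {c : Finset G.V} (hc : c ∈ G.comps S) : 0 < G.wt c := by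
  obtain ⟨v₀, -, rfl⟩ := Finset.mem_image.mp hc
  exact Finset.sum_pos' (fun x _ => Nat.zero_le _)
    ⟨v₀, G.mem_cls_self S v₀, G.wpos v₀⟩

lemma cls_eq_of_mem {S : Finset G.E} {c : Finset G.V} {u : G.V} (hc : c ∈ G.comps S)
    (hu : u ∈ c) : G.cls S u = c := by
  obtain ⟨v₀, -, rfl⟩ := Finset.mem_image.mp hc
  exact (G.cls_eq (G.mem_cls.mp hu)).symm

lemma diag_of_const {S : Finset G.E} {κ : G.V → ℕ}
    (h : ∀ v u, G.connRel S v u → κ v = κ u) {e : G.E} (he : e ∈ S) :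
    ((G.ends e).map κ).IsDiag := by
  obtain ⟨x, y, hxy⟩ : ∃ x y, G.ends e = s(x, y) :=
    Sym2.ind (f := fun z => ∃ x y, z = s(x, y)) (fun x y => ⟨x, y, rfl⟩) (G.ends e)
  rw [hxy, Sym2.map_pair_eq, Sym2.mk_isDiag_iff]
  exact h x y (Relation.EqvGen.rel x y ⟨e, he, hxy⟩)

lemma coeff_pProd (S : Finset G.E) (d : ℕ →₀ ℕ) :
    (MvPowerSeries.coeff d) (pProd ℤ (G.compWeights S)) =
      (((G.colorings d).filter (fun κ => ∀ e ∈ S, ((G.ends e).map κ).IsDiag)).card : ℤ) := by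
  have h1 : pProd ℤ (G.compWeights S) = ∏ c ∈ G.comps S, psum ℤ (G.wt c) := by
    rw [pProd, compWeights, Multiset.map_map, Finset.prod_eq_multiset_prod]
    rfl
  have hco : ∀ (e : ℕ →₀ ℕ) (n : ℕ), (MvPowerSeries.coeff e) (psum ℤ n)
      = if ∃ k, e = Finsupp.single k n then 1 else 0 := fun e n => rfl
  rw [h1, MvPowerSeries.coeff_prod]
  set A := ((G.comps S).finsuppAntidiag d).filter
    (fun l => ∀ c ∈ G.comps S, ∃ k, l c = Finsupp.single k (G.wt c)) with hA
  have hstep : (∑ l ∈ (G.comps S).finsuppAntidiag d,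
      ∏ c ∈ G.comps S, (MvPowerSeries.coeff (l c)) (psum ℤ (G.wt c))) = (A.card : ℤ) := by
    rw [← Finset.sum_filter_add_sum_filter_not ((G.comps S).finsuppAntidiag d)
      (fun l => ∀ c ∈ G.comps S, ∃ k, l c = Finsupp.single k (G.wt c))]
    have hone : ∀ l ∈ A, (∏ c ∈ G.comps S, (MvPowerSeries.coeff (l c)) (psum ℤ (G.wt c))) = 1 := by
      intro l hl
      refine Finset.prod_eq_one fun c hc => ?_
      rw [hco]
      exact if_pos ((Finset.mem_filter.mp hl).2 c hc)
    have hzero : ∀ l ∈ ((G.comps S).finsuppAntidiag d).filter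
        (fun l => ¬ ∀ c ∈ G.comps S, ∃ k, l c = Finsupp.single k (G.wt c)),
        (∏ c ∈ G.comps S, (MvPowerSeries.coeff (l c)) (psum ℤ (G.wt c))) = 0 := by
      intro l hl
      have := (Finset.mem_filter.mp hl).2
      push_neg at this
      obtain ⟨c, hc, hne⟩ := this
      refine Finset.prod_eq_zero hc ?_
      rw [hco]
      exact if_neg (by simpa using hne)
    rw [Finset.sum_congr rfl hone, Finset.sum_congr rfl hzero]
    simp
  rw [hstep]
  congr 1
  refine Finset.card_bij' (fun l _ => fun v => key (l (G.cls S v)))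
    (fun κ _ => G.toL S κ) ?_ ?_ ?_ ?_
  · -- i maps into colorings filter
    intro l hl
    obtain ⟨hanti, hall⟩ := Finset.mem_filter.mp hl
    obtain ⟨hsum, hsupp⟩ := Finset.mem_finsuppAntidiag.mp hanti
    set κl : G.V → ℕ := fun v => key (l (G.cls S v)) with hκl
    have hcls : ∀ v : G.V, G.cls S v ∈ G.comps S :=
      fun v => Finset.mem_image_of_mem (G.cls S) (Finset.mem_univ v)
    have hext : ∀ c ∈ G.comps S, l c = Finsupp.single (key (l c)) (G.wt c) := by
      intro c hc
      obtain ⟨k, hk⟩ := hall c hc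
      rw [hk, key_single (G.wt_pos hc).ne']
    have hconst : ∀ c ∈ G.comps S, ∀ u ∈ c, κl u = key (l c) := by
      intro c hc u hu
      rw [hκl]
      simp only
      rw [G.cls_eq_of_mem hc hu]
    have hc2 : ∀ v u : G.V, G.connRel S v u → κl v = κl u := by
      intro v u h
      rw [hκl]
      simp only
      rw [G.cls_eq h]
    refine Finset.mem_filter.mpr ⟨Finset.mem_filter.mpr ⟨?_, ?_⟩, fun e he => G.diag_of_const hc2 he⟩
    · -- κl ∈ piFinset d.support
      refine Fintype.mem_piFinset.mpr fun v => Finsupp.mem_support_iff.mpr ?_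
      show d (κl v) ≠ 0
      have h1 : d (κl v) = ∑ c ∈ G.comps S, l c (κl v) := by
        rw [← hsum, Finsupp.finset_sum_apply]
      have h2 : l (G.cls S v) (κl v) ≤ ∑ c ∈ G.comps S, l c (κl v) :=
        Finset.single_le_sum (f := fun c => l c (κl v)) (fun c _ => Nat.zero_le _) (hcls v)
      have h3 : l (G.cls S v) (κl v) = G.wt (G.cls S v) := by
        conv_lhs => rw [hext _ (hcls v)]
        rw [show κl v = key (l (G.cls S v)) from rfl, Finsupp.single_eq_same]
      have h4 := G.wt_pos (hcls v)
      omega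
    · -- mono κl = d
      show G.mono κl = d
      rw [mono, ← G.sum_comps S (fun v => Finsupp.single (κl v) (G.w v)), ← hsum]
      refine Finset.sum_congr rfl fun c hc => ?_
      rw [G.const_sum_single (hconst c hc), ← hext c hc]
  · -- toL maps into antidiag filter
    intro κ hκ
    obtain ⟨hcol, hdiag⟩ := Finset.mem_filter.mp hκ
    obtain ⟨-, hmono⟩ := Finset.mem_filter.mp hcol
    refine Finset.mem_filter.mpr ⟨Finset.mem_finsuppAntidiag.mpr ⟨?_, ?_⟩, ?_⟩
    · -- sum = d
      rw [Finset.sum_congr rfl (fun c hc => G.toL_apply_mem hc κ),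
        G.sum_comps S (fun v => Finsupp.single (κ v) (G.w v))]
      exact hmono
    · -- support ⊆ comps
      intro c hcw
      by_contra hc
      exact (Finsupp.mem_support_iff.mp hcw) (G.toL_apply_not_mem hc κ)
    · -- single form
      intro c hc
      obtain ⟨v₀, -, rfl⟩ := Finset.mem_image.mp hc
      refine ⟨κ v₀, ?_⟩
      rw [G.toL_apply_mem hc κ, G.const_sum_single (fun u hu =>
        (G.const_of_diag hdiag (G.mem_cls.mp hu)).symm)]
  · -- left inverse
    intro l hl
    obtain ⟨hanti, hall⟩ := Finset.mem_filter.mp hl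
    obtain ⟨hsum, hsupp⟩ := Finset.mem_finsuppAntidiag.mp hanti
    have hext : ∀ c ∈ G.comps S, l c = Finsupp.single (key (l c)) (G.wt c) := by
      intro c hc
      obtain ⟨k, hk⟩ := hall c hc
      rw [hk, key_single (G.wt_pos hc).ne']
    ext c m
    by_cases hc : c ∈ G.comps S
    · rw [G.toL_apply_mem hc, G.const_sum_single (k := key (l c))
        (fun u hu => by
          show key (l (G.cls S u)) = key (l c)
          rw [G.cls_eq_of_mem hc hu]), ← hext c hc]
    · rw [G.toL_apply_not_mem hc]
      have : l c = 0 := by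
        by_contra h
        exact hc (hsupp (Finsupp.mem_support_iff.mpr h))
      rw [this]
  · -- right inverse
    intro κ hκ
    obtain ⟨-, hdiag⟩ := Finset.mem_filter.mp hκ
    funext v
    have hc : G.cls S v ∈ G.comps S := Finset.mem_image_of_mem (G.cls S) (Finset.mem_univ v)
    have hval : (G.toL S κ) (G.cls S v) = Finsupp.single (κ v) (G.wt (G.cls S v)) := by
      rw [G.toL_apply_mem hc κ, G.const_sum_single (fun u hu =>
        G.const_of_diag hdiag (G.connRel_symm (G.mem_cls.mp hu)))]
    show key ((G.toL S κ) (G.cls S v)) = κ v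
    rw [hval, key_single (G.wt_pos hc).ne']

end WGraph

/-- **Power-sum expansion of the chromatic symmetric function**:
`X_{(G,w)} = Σ_{S ⊆ E(G)} (-1)^{|S|} p_{λ(S)}`. -/
theorem chromatic_power_sum_expansion (G : WGraph) :
    G.X ℤ = ∑ S : Finset G.E, (-1 : MvPowerSeries ℕ ℤ) ^ S.card * pProd ℤ (G.compWeights S) := by
  apply MvPowerSeries.ext
  intro d
  rw [map_sum]
  have hneg : (-1 : MvPowerSeries ℕ ℤ) = (MvPowerSeries.C (σ := ℕ) (-1 : ℤ)) := by
    rw [map_neg, map_one]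
  have hterm : ∀ S : Finset G.E,
      (MvPowerSeries.coeff d) ((-1 : MvPowerSeries ℕ ℤ) ^ S.card * pProd ℤ (G.compWeights S))
      = (-1 : ℤ) ^ S.card *
        (((G.colorings d).filter (fun κ => ∀ e ∈ S, ((G.ends e).map κ).IsDiag)).card : ℤ) := by
    intro S
    rw [hneg, ← map_pow, MvPowerSeries.coeff_C_mul, G.coeff_pProd]
  rw [Finset.sum_congr rfl (fun S _ => hterm S)]
  have hX : (MvPowerSeries.coeff d) (G.X ℤ) =
      (((G.colorings d).filter (fun κ => G.Proper κ)).card : ℤ) := rfl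
  rw [hX]
  -- replace inner cards by sums over colorings
  have hcard : ∀ S : Finset G.E,
      ((((G.colorings d).filter (fun κ => ∀ e ∈ S, ((G.ends e).map κ).IsDiag)).card : ℤ))
      = ∑ κ ∈ G.colorings d, if ∀ e ∈ S, ((G.ends e).map κ).IsDiag then (1 : ℤ) else 0 := by
    intro S
    rw [Finset.sum_boole]
  rw [Finset.sum_congr rfl (fun S _ => by rw [hcard S, Finset.mul_sum])]
  rw [Finset.sum_comm]
  have hκ : ∀ κ : G.V → ℕ,
      (∑ S : Finset G.E, (-1 : ℤ) ^ S.card *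
        (if ∀ e ∈ S, ((G.ends e).map κ).IsDiag then (1 : ℤ) else 0))
      = if G.Proper κ then 1 else 0 := by
    intro κ
    set M : Finset G.E := Finset.univ.filter (fun e => ((G.ends e).map κ).IsDiag) with hM
    have hsplit : ∀ S : Finset G.E,
        (-1 : ℤ) ^ S.card * (if ∀ e ∈ S, ((G.ends e).map κ).IsDiag then (1 : ℤ) else 0)
        = if S ⊆ M then (-1 : ℤ) ^ S.card else 0 := by
      intro S
      by_cases h : ∀ e ∈ S, ((G.ends e).map κ).IsDiag
      · have hs : S ⊆ M := fun e he => Finset.mem_filter.mpr ⟨Finset.mem_univ e, h e he⟩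
        rw [if_pos h, if_pos hs, mul_one]
      · have hs : ¬ S ⊆ M := fun hsub => h fun e he => (Finset.mem_filter.mp (hsub he)).2
        rw [if_neg h, if_neg hs, mul_zero]
    rw [Finset.sum_congr rfl (fun S _ => hsplit S)]
    have hps : (Finset.univ : Finset (Finset G.E)).filter (fun S => S ⊆ M) = M.powerset := by
      ext S
      simp [Finset.mem_powerset]
    rw [← Finset.sum_filter, hps, Finset.sum_powerset_neg_one_pow_card]
    congr 1
    rw [eq_iff_iff, hM, Finset.filter_eq_empty_iff]
    constructor
    · intro h e
      exact h (Finset.mem_univ e)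
    · intro h e _
      exact h e
  rw [Finset.sum_congr rfl (fun κ _ => hκ κ), Finset.sum_boole]
end

section
/- Setting all n variables to 1 with n = −1 in the chromatic symmetric function recovers Stanley's acyclic orientation theorem: for a simple graph G on k vertices, χ_G(−1) = (−1)^k · a(G), where a(G) is the number of acyclic orientations of G. -/
open scoped Classical

/-- `o` is an orientation of the simple graph `G`: it directs each edge of `G`
in exactly one of the two possible ways. -/
def IsOrientation {V : Type} (G : SimpleGraph V) (o : V → V → Bool) : Prop :=
  (∀ u v, o u v = true → G.Adj u v) ∧
    ∀ u v, G.Adj u v → (o u v = true ↔ ¬ o v u = true)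

/-- The orientation `o` is acyclic: there is no directed cycle. -/
def IsAcyclicOrientation {V : Type} (G : SimpleGraph V) (o : V → V → Bool) : Prop :=
  IsOrientation G o ∧ ∀ v, ¬ Relation.TransGen (fun a b => o a b = true) v v

set_option linter.unusedSectionVars false
set_option linter.unusedVariables false

namespace StanleyAux

variable {V : Type} [Fintype V]

def delG (G : SimpleGraph V) (u v : V) : SimpleGraph V where
  Adj a b := G.Adj a b ∧ ¬(a = u ∧ b = v) ∧ ¬(a = v ∧ b = u)
  symm := ⟨fun a b => by intro ⟨h1, h2, h3⟩; exact ⟨h1.symm, fun ⟨x, y⟩ => h3 ⟨y, x⟩, fun ⟨x, y⟩ => h2 ⟨y, x⟩⟩⟩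
  loopless := ⟨fun a => by intro ⟨h1, _⟩; exact G.loopless.irrefl a h1⟩

def mergeG (G : SimpleGraph V) (u v : V) : SimpleGraph V where
  Adj a b := a ≠ b ∧ a ≠ v ∧ b ≠ v ∧
    (G.Adj a b ∨ (a = u ∧ G.Adj v b) ∨ (b = u ∧ G.Adj a v))
  symm := ⟨fun a b => by
    rintro ⟨h1, h2, h3, h4⟩
    refine ⟨h1.symm, h3, h2, ?_⟩
    rcases h4 with h | ⟨rfl, h⟩ | ⟨rfl, h⟩
    · exact Or.inl h.symm
    · exact Or.inr (Or.inr ⟨rfl, h.symm⟩)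
    · exact Or.inr (Or.inl ⟨rfl, h.symm⟩)⟩
  loopless := ⟨fun a => by rintro ⟨h1, _⟩; exact h1 rfl⟩

noncomputable def ac (G : SimpleGraph V) : ℕ :=
  Fintype.card {o : V → V → Bool // IsAcyclicOrientation G o}

/-- extend an orientation by the directed edge x → y -/
noncomputable def ext (o : V → V → Bool) (x y : V) : V → V → Bool :=
  fun a b => if a = x ∧ b = y then true else o a b

/-- restrict an orientation to the edges of H -/
noncomputable def rst (H : SimpleGraph V) (o : V → V → Bool) : V → V → Bool :=
  fun a b => o a b && decide (H.Adj a b)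

section TG
variable {o : V → V → Bool} {x y : V}

theorem rel_rst {H : SimpleGraph V} {a b : V} :
    rst H o a b = true ↔ o a b = true ∧ H.Adj a b := by
  rw [rst, Bool.and_eq_true, decide_eq_true_iff]

theorem transGen_ext {s t : V}
    (h : Relation.TransGen (fun a b => ext o x y a b = true) s t) :
    Relation.TransGen (fun a b => o a b = true) s t ∨
      (Relation.ReflTransGen (fun a b => o a b = true) s x ∧
       Relation.ReflTransGen (fun a b => o a b = true) y t) := by
  induction h with
  | @single c h1 =>
    by_cases hc : s = x ∧ c = y
    · exact Or.inr ⟨hc.1 ▸ Relation.ReflTransGen.refl, hc.2 ▸ Relation.ReflTransGen.refl⟩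
    · rw [ext, if_neg hc] at h1
      exact Or.inl (Relation.TransGen.single h1)
  | @tail b c hxb hbc ih =>
    by_cases hc : b = x ∧ c = y
    · rcases ih with h | ⟨h1, _⟩
      · exact Or.inr ⟨(hc.1 ▸ h).to_reflTransGen, hc.2 ▸ Relation.ReflTransGen.refl⟩
      · exact Or.inr ⟨h1, hc.2 ▸ Relation.ReflTransGen.refl⟩
    · rw [ext, if_neg hc] at hbc
      rcases ih with h | ⟨h1, h2⟩
      · exact Or.inl (h.tail hbc)
      · exact Or.inr ⟨h1, h2.tail hbc⟩

theorem ext_acyclic (hac : ∀ z, ¬ Relation.TransGen (fun a b => o a b = true) z z)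
    (hnr : ¬ Relation.ReflTransGen (fun a b => o a b = true) y x) :
    ∀ z, ¬ Relation.TransGen (fun a b => ext o x y a b = true) z z := by
  intro z hz
  rcases transGen_ext hz with h | ⟨h1, h2⟩
  · exact hac z h
  · exact hnr (h2.trans h1)

end TG

variable {G : SimpleGraph V} {u v : V}

theorem adjG_iff (huv : G.Adj u v) (a b : V) :
    G.Adj a b ↔ (delG G u v).Adj a b ∨ (a = u ∧ b = v) ∨ (a = v ∧ b = u) := by
  constructor
  · intro h
    by_cases h1 : a = u ∧ b = v
    · exact Or.inr (Or.inl h1)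
    by_cases h2 : a = v ∧ b = u
    · exact Or.inr (Or.inr h2)
    · exact Or.inl ⟨h, h1, h2⟩
  · rintro (h | ⟨rfl, rfl⟩ | ⟨rfl, rfl⟩)
    · exact h.1
    · exact huv
    · exact huv.symm

theorem ext_orientation {o : V → V → Bool} {x y : V}
    (hor : IsOrientation (delG G u v) o) (hxy : G.Adj x y)
    (hiff : ∀ a b, G.Adj a b ↔ (delG G u v).Adj a b ∨ (a = x ∧ b = y) ∨ (a = y ∧ b = x))
    (hnd : ∀ a b, (delG G u v).Adj a b → ¬(a = x ∧ b = y) ∧ ¬(a = y ∧ b = x)) :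
    IsOrientation G (ext o x y) := by
  have hne : x ≠ y := hxy.ne
  have hoyx : o y x = false := by
    cases h : o y x
    · rfl
    · exact absurd ⟨rfl, rfl⟩ (hnd y x (hor.1 y x h)).2
  constructor
  · intro a b hab
    rw [ext] at hab
    by_cases hc : a = x ∧ b = y
    · rw [hc.1, hc.2]; exact hxy
    · rw [if_neg hc] at hab
      exact (hiff a b).2 (Or.inl (hor.1 a b hab))
  · intro a b hab
    rcases (hiff a b).1 hab with hd | ⟨ha, hb⟩ | ⟨ha, hb⟩
    · have h1 : ¬(a = x ∧ b = y) := (hnd a b hd).1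
      have h2 : ¬(b = x ∧ a = y) := fun ⟨p, q⟩ => (hnd a b hd).2 ⟨q, p⟩
      rw [ext, ext, if_neg h1, if_neg h2]
      exact hor.2 a b hd
    · rw [ha, hb]
      simp only [ext]
      rw [if_pos (⟨trivial, trivial⟩ : True ∧ True), if_neg (fun hc : y = x ∧ x = y => hne hc.1.symm),
        hoyx]
      simp
    · rw [ha, hb]
      simp only [ext]
      rw [if_pos (⟨trivial, trivial⟩ : True ∧ True), if_neg (fun hc : y = x ∧ x = y => hne hc.1.symm),
        hoyx]
      simp

theorem hnd_uv : ∀ a b, (delG G u v).Adj a b → ¬(a = u ∧ b = v) ∧ ¬(a = v ∧ b = u) :=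
  fun _ _ hd => ⟨hd.2.1, hd.2.2⟩

theorem hnd_vu : ∀ a b, (delG G u v).Adj a b → ¬(a = v ∧ b = u) ∧ ¬(a = u ∧ b = v) :=
  fun _ _ hd => ⟨hd.2.2, hd.2.1⟩

theorem adjG_iff' (huv : G.Adj u v) (a b : V) :
    G.Adj a b ↔ (delG G u v).Adj a b ∨ (a = v ∧ b = u) ∨ (a = u ∧ b = v) := by
  rw [adjG_iff huv a b]; tauto

/-- restriction facts -/
theorem rst_orientation (ho : IsOrientation G o) :
    IsOrientation (delG G u v) (rst (delG G u v) o) := by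
  constructor
  · intro a b hab
    exact (rel_rst.1 hab).2
  · intro a b hab
    have hab' : (delG G u v).Adj b a := hab.symm
    constructor
    · intro h hko
      have h1 := (rel_rst.1 h).1
      have h2 := (rel_rst.1 hko).1
      exact (ho.2 a b hab.1).1 h1 h2
    · intro h
      rw [rel_rst]
      refine ⟨?_, hab⟩
      by_contra hno
      have : o b a = true := by
        cases hba : o b a
        · exfalso
          exact hno ((ho.2 a b hab.1).2 (by rw [hba]; simp))
        · rfl
      exact h (rel_rst.2 ⟨this, hab'⟩)

theorem rst_acyclic (ho : ∀ z, ¬ Relation.TransGen (fun a b => o a b = true) z z) :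
    ∀ z, ¬ Relation.TransGen (fun a b => rst (delG G u v) o a b = true) z z := by
  intro z hz
  exact ho z (Relation.TransGen.mono (fun a b h => (rel_rst.1 h).1) _ _ hz)

theorem rel_of_false {o : V → V → Bool} (hor : IsOrientation G o) (huv : G.Adj u v)
    (h : ¬ o u v = true) : o v u = true := by
  cases hvu : o v u
  · exact absurd ((hor.2 u v huv).2 (by rw [hvu]; simp)) h
  · rfl

/-- doubly extendable acyclic orientations of the deleted graph -/
noncomputable def E1 (huv : G.Adj u v) :
    {o : V → V → Bool // IsAcyclicOrientation G o} ≃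
      ({o : V → V → Bool // IsAcyclicOrientation (delG G u v) o ∧
          ¬ Relation.ReflTransGen (fun a b => o a b = true) v u} ⊕
       {o : V → V → Bool // IsAcyclicOrientation (delG G u v) o ∧
          ¬ Relation.ReflTransGen (fun a b => o a b = true) u v}) := by
  have hne : u ≠ v := huv.ne
  refine
  { toFun := fun o =>
      if h : o.1 u v = true then
        Sum.inl ⟨rst (delG G u v) o.1, ⟨⟨rst_orientation o.2.1, rst_acyclic o.2.2⟩, ?_⟩⟩
      else
        Sum.inr ⟨rst (delG G u v) o.1, ⟨⟨rst_orientation o.2.1, rst_acyclic o.2.2⟩, ?_⟩⟩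
    invFun := fun s =>
      match s with
      | Sum.inl ⟨o, ho, hnr⟩ =>
          ⟨ext o u v, ⟨ext_orientation ho.1 huv (adjG_iff huv) hnd_uv, ext_acyclic ho.2 hnr⟩⟩
      | Sum.inr ⟨o, ho, hnr⟩ =>
          ⟨ext o v u, ⟨ext_orientation ho.1 huv.symm (adjG_iff' huv) hnd_vu, ext_acyclic ho.2 hnr⟩⟩
    left_inv := ?_
    right_inv := ?_ }
  · -- inl condition: ¬ RTG v u for restriction, given o u v = true
    intro hr
    rcases Relation.reflTransGen_iff_eq_or_transGen.1 hr with he | ht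
    · exact hne he
    · exact o.2.2 v ((Relation.TransGen.mono (fun a b hh => (rel_rst.1 hh).1) _ _ ht).tail h)
  · -- inr condition
    intro hr
    have hvu : o.1 v u = true := rel_of_false o.2.1 huv h
    rcases Relation.reflTransGen_iff_eq_or_transGen.1 hr with he | ht
    · exact hne he.symm
    · exact o.2.2 u ((Relation.TransGen.mono (fun a b hh => (rel_rst.1 hh).1) _ _ ht).tail hvu)
  · -- left inverse
    intro o
    by_cases h : o.1 u v = true
    · dsimp only
      rw [dif_pos h]
      apply Subtype.ext
      show ext (rst (delG G u v) o.1) u v = o.1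
      funext a b
      rw [ext]
      by_cases hc : a = u ∧ b = v
      · rw [if_pos hc, hc.1, hc.2, h]
      · rw [if_neg hc]
        cases hab : o.1 a b
        · cases hr : rst (delG G u v) o.1 a b
          · rfl
          · exact absurd (rel_rst.1 hr).1 (by rw [hab]; simp)
        · refine rel_rst.2 ⟨hab, ?_, hc, ?_⟩
          · exact o.2.1.1 a b hab
          · rintro ⟨ha', hb'⟩
            rw [ha', hb'] at hab
            exact (o.2.1.2 u v huv).1 h hab
    · dsimp only
      rw [dif_neg h]
      have hvu : o.1 v u = true := rel_of_false o.2.1 huv h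
      apply Subtype.ext
      show ext (rst (delG G u v) o.1) v u = o.1
      funext a b
      rw [ext]
      by_cases hc : a = v ∧ b = u
      · rw [if_pos hc, hc.1, hc.2, hvu]
      · rw [if_neg hc]
        cases hab : o.1 a b
        · cases hr : rst (delG G u v) o.1 a b
          · rfl
          · exact absurd (rel_rst.1 hr).1 (by rw [hab]; simp)
        · refine rel_rst.2 ⟨hab, ?_, ?_, hc⟩
          · exact o.2.1.1 a b hab
          · rintro ⟨ha', hb'⟩
            rw [ha', hb'] at hab
            exact h hab
  · -- right inverse
    rintro (⟨o, ho, hnr⟩ | ⟨o, ho, hnr⟩)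
    · have hext : ext o u v u v = true := by rw [ext, if_pos ⟨rfl, rfl⟩]
      dsimp only
      rw [dif_pos hext]
      apply congrArg Sum.inl
      apply Subtype.ext
      show rst (delG G u v) (ext o u v) = o
      funext a b
      by_cases hc : a = u ∧ b = v
      · rw [hc.1, hc.2]
        cases hr : rst (delG G u v) (ext o u v) u v
        · cases hob : o u v
          · rfl
          · exact absurd ⟨rfl, rfl⟩ (hnd_uv u v (ho.1.1 u v hob)).1
        · exact absurd (rel_rst.1 hr).2 (fun hd => hd.2.1 ⟨rfl, rfl⟩)
      · have hext2 : ext o u v a b = o a b := by rw [ext, if_neg hc]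
        cases hab : o a b
        · cases hr : rst (delG G u v) (ext o u v) a b
          · rfl
          · have := (rel_rst.1 hr).1
            rw [hext2, hab] at this
            exact absurd this (by simp)
        · exact rel_rst.2 ⟨by rw [hext2, hab], ho.1.1 a b hab⟩
    · have hext : ext o v u u v = false := by
        rw [ext, if_neg (fun hc : u = v ∧ v = u => huv.ne hc.1)]
        cases hob : o u v
        · rfl
        · exact absurd ⟨rfl, rfl⟩ (hnd_uv u v (ho.1.1 u v hob)).1
      dsimp only
      rw [dif_neg (show ¬ ext o v u u v = true by rw [hext]; simp)]
      apply congrArg Sum.inr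
      apply Subtype.ext
      show rst (delG G u v) (ext o v u) = o
      funext a b
      by_cases hc : a = v ∧ b = u
      · rw [hc.1, hc.2]
        cases hr : rst (delG G u v) (ext o v u) v u
        · cases hob : o v u
          · rfl
          · exact absurd ⟨rfl, rfl⟩ (hnd_uv v u (ho.1.1 v u hob)).2
        · exact absurd (rel_rst.1 hr).2 (fun hd => hd.2.2 ⟨rfl, rfl⟩)
      · have hext2 : ext o v u a b = o a b := by rw [ext, if_neg hc]
        cases hab : o a b
        · cases hr : rst (delG G u v) (ext o v u) a b
          · rfl
          · have := (rel_rst.1 hr).1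
            rw [hext2, hab] at this
            exact absurd this (by simp)
        · exact rel_rst.2 ⟨by rw [hext2, hab], ho.1.1 a b hab⟩

/-- merge map -/
noncomputable def mmap (u v : V) : V → V := fun x => if x = v then u else x

noncomputable def psi (G : SimpleGraph V) (u v : V) (o' : V → V → Bool) : V → V → Bool :=
  fun a b => o' (mmap u v a) (mmap u v b) && decide ((delG G u v).Adj a b)

noncomputable def phi (G : SimpleGraph V) (u v : V) (o : V → V → Bool) : V → V → Bool :=
  fun a b => if (mergeG G u v).Adj a b then
      (if G.Adj a b then o a b else if a = u then o v b else o a v) else false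

def lft (u v x x' : V) : Prop := x' = x ∨ (x = u ∧ x' = v)

theorem mmap_u (hne : u ≠ v) : mmap u v u = u := if_neg hne
theorem mmap_v : mmap u v v = u := if_pos rfl
theorem mmap_x {x : V} (hx : x ≠ v) : mmap u v x = x := if_neg hx

theorem adj_del_merge (huv : G.Adj u v) :
    ∀ a b, (delG G u v).Adj a b → (mergeG G u v).Adj (mmap u v a) (mmap u v b) := by
  have hne : u ≠ v := huv.ne
  rintro a b ⟨hab, h1, h2⟩
  by_cases ha : a = v
  · have hbv : b ≠ v := fun hb' => hab.ne (ha.trans hb'.symm)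
    have hbu : b ≠ u := fun h => h2 ⟨ha, h⟩
    rw [ha, mmap_v, mmap_x hbv]
    exact ⟨fun h => hbu h.symm, hne, hbv, Or.inr (Or.inl ⟨rfl, ha ▸ hab⟩)⟩
  · by_cases hb : b = v
    · have hau : a ≠ u := fun h => h1 ⟨h, hb⟩
      rw [hb, mmap_v, mmap_x ha]
      exact ⟨hau, ha, hne, Or.inr (Or.inr ⟨rfl, hb ▸ hab⟩)⟩
    · rw [mmap_x ha, mmap_x hb]
      exact ⟨hab.ne, ha, hb, Or.inl hab⟩

theorem psi_rel {o' : V → V → Bool} {a b : V} :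
    psi G u v o' a b = true ↔
      o' (mmap u v a) (mmap u v b) = true ∧ (delG G u v).Adj a b := by
  rw [psi, Bool.and_eq_true, decide_eq_true_iff]

theorem psi_orientation (huv : G.Adj u v) {o' : V → V → Bool}
    (ho' : IsOrientation (mergeG G u v) o') :
    IsOrientation (delG G u v) (psi G u v o') := by
  constructor
  · exact fun a b hab => (psi_rel.1 hab).2
  · intro a b hd
    have hm := adj_del_merge huv a b hd
    constructor
    · intro h1 h2
      exact (ho'.2 _ _ hm).1 (psi_rel.1 h1).1 (psi_rel.1 h2).1
    · intro h
      refine psi_rel.2 ⟨?_, hd⟩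
      cases hob : o' (mmap u v a) (mmap u v b)
      · exfalso
        have hba : o' (mmap u v b) (mmap u v a) = true :=
          rel_of_false ho' hm (by rw [hob]; simp)
        exact h (psi_rel.2 ⟨hba, hd.symm⟩)
      · rfl

theorem psi_acyclic (huv : G.Adj u v) {o' : V → V → Bool}
    (ho' : ∀ z, ¬ Relation.TransGen (fun a b => o' a b = true) z z) :
    ∀ z, ¬ Relation.TransGen (fun a b => psi G u v o' a b = true) z z := by
  intro z hz
  refine ho' (mmap u v z) (Relation.TransGen.lift (p := fun a b => o' a b = true)
    (mmap u v) (fun a b h => (psi_rel.1 h).1) _ _ hz)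

theorem psi_cond (huv : G.Adj u v) {o' : V → V → Bool}
    (ho' : ∀ z, ¬ Relation.TransGen (fun a b => o' a b = true) z z) {x y : V}
    (hx : mmap u v x = u) (hy : mmap u v y = u) (hxy : x ≠ y) :
    ¬ Relation.ReflTransGen (fun a b => psi G u v o' a b = true) x y := by
  intro hr
  rcases Relation.reflTransGen_iff_eq_or_transGen.1 hr with he | ht
  · exact hxy he.symm
  · have : Relation.TransGen (fun a b => o' a b = true) (mmap u v x) (mmap u v y) :=
      Relation.TransGen.lift (p := fun a b => o' a b = true)
      (mmap u v) (fun a b h => (psi_rel.1 h).1) _ _ ht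
    rw [hx, hy] at this
    exact ho' u this

theorem phi_orientation (huv : G.Adj u v) {o : V → V → Bool}
    (ho : IsOrientation (delG G u v) o) :
    IsOrientation (mergeG G u v) (phi G u v o) := by
  have hne : u ≠ v := huv.ne
  constructor
  · intro a b hab
    by_cases hm : (mergeG G u v).Adj a b
    · exact hm
    · rw [phi, if_neg hm] at hab
      exact absurd hab (by simp)
  · rintro a b hm
    obtain ⟨hab, ha, hb, hor⟩ := hm
    have hm : (mergeG G u v).Adj a b := ⟨hab, ha, hb, hor⟩
    have hm' : (mergeG G u v).Adj b a := hm.symm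
    simp only [phi]
    rw [if_pos hm, if_pos hm']
    by_cases hG : G.Adj a b
    · rw [if_pos hG, if_pos hG.symm]
      exact ho.2 a b ⟨hG, fun hc => hb hc.2, fun hc => ha hc.1⟩
    · have hG' : ¬ G.Adj b a := fun h => hG h.symm
      rw [if_neg hG, if_neg hG']
      rcases hor with h | ⟨hau, h⟩ | ⟨hbu, h⟩
      · exact absurd h hG
      · have hbu' : b ≠ u := fun hc => hab (hau.trans hc.symm)
        rw [if_pos hau, if_neg hbu']
        exact ho.2 v b ⟨h, fun hc => hne hc.1.symm, fun hc => hbu' hc.2⟩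
      · have hau' : a ≠ u := fun hc => hab (hc.trans hbu.symm)
        rw [if_neg hau', if_pos hbu]
        exact ho.2 a v ⟨h, fun hc => hau' hc.1, fun hc => hne hc.2.symm⟩

theorem phi_step (huv : G.Adj u v) {o : V → V → Bool} {a b : V}
    (h : phi G u v o a b = true) :
    ∃ a' b', lft u v a a' ∧ lft u v b b' ∧ o a' b' = true := by
  have hm : (mergeG G u v).Adj a b := by
    by_cases hm : (mergeG G u v).Adj a b
    · exact hm
    · rw [phi, if_neg hm] at h
      exact absurd h (by simp)
  rw [phi, if_pos hm] at h
  by_cases hG : G.Adj a b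
  · rw [if_pos hG] at h
    exact ⟨a, b, Or.inl rfl, Or.inl rfl, h⟩
  · rw [if_neg hG] at h
    by_cases hau : a = u
    · rw [if_pos hau] at h
      exact ⟨v, b, Or.inr ⟨hau, rfl⟩, Or.inl rfl, h⟩
    · rw [if_neg hau] at h
      have hbu : b = u := by
        rcases hm.2.2.2 with hh | ⟨hh, -⟩ | ⟨hh, -⟩
        · exact absurd hh hG
        · exact absurd hh hau
        · exact hh
      exact ⟨a, v, Or.inl rfl, Or.inr ⟨hbu, rfl⟩, h⟩

theorem bad_seg (huv : G.Adj u v) {o : V → V → Bool}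
    (hac : ∀ z, ¬ Relation.TransGen (fun a b => o a b = true) z z)
    (hQ1 : ¬ Relation.ReflTransGen (fun a b => o a b = true) v u)
    (hQ2 : ¬ Relation.ReflTransGen (fun a b => o a b = true) u v) :
    ∀ s t, lft u v u s → lft u v u t →
      ¬ Relation.TransGen (fun a b => o a b = true) s t := by
  rintro s t (rfl | ⟨-, rfl⟩) (rfl | ⟨-, rfl⟩) hT
  · exact hac _ hT
  · exact hQ2 hT.to_reflTransGen
  · exact hQ1 hT.to_reflTransGen
  · exact hac _ hT

theorem lft2 (hne : u ≠ v) : ∀ c c₁ c₂, lft u v c c₁ → lft u v c c₂ →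
    c₁ = c₂ ∨ (lft u v u c₁ ∧ lft u v u c₂) := by
  intro c c₁ c₂ h1 h2
  by_cases hcu : c = u
  · right
    constructor
    · rcases h1 with rfl | ⟨-, rfl⟩
      · exact Or.inl hcu
      · exact Or.inr ⟨rfl, rfl⟩
    · rcases h2 with rfl | ⟨-, rfl⟩
      · exact Or.inl hcu
      · exact Or.inr ⟨rfl, rfl⟩
  · left
    rcases h1 with rfl | ⟨hc, -⟩
    · rcases h2 with rfl | ⟨hc, -⟩
      · rfl
      · exact absurd hc hcu
    · exact absurd hc hcu

theorem phi_trans (huv : G.Adj u v) {o : V → V → Bool}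
    (hac : ∀ z, ¬ Relation.TransGen (fun a b => o a b = true) z z)
    (hQ1 : ¬ Relation.ReflTransGen (fun a b => o a b = true) v u)
    (hQ2 : ¬ Relation.ReflTransGen (fun a b => o a b = true) u v)
    {x y : V} (h : Relation.TransGen (fun a b => phi G u v o a b = true) x y) :
    (∃ x' y', lft u v x x' ∧ lft u v y y' ∧
        Relation.TransGen (fun a b => o a b = true) x' y') ∨
    ((∃ x' t, lft u v x x' ∧ lft u v u t ∧
        Relation.TransGen (fun a b => o a b = true) x' t) ∧
     (∃ s y', lft u v u s ∧ lft u v y y' ∧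
        Relation.TransGen (fun a b => o a b = true) s y')) := by
  have hne : u ≠ v := huv.ne
  induction h with
  | @single c h1 =>
    obtain ⟨a', b', hA, hB, ho⟩ := phi_step huv h1
    exact Or.inl ⟨a', b', hA, hB, Relation.TransGen.single ho⟩
  | @tail b c hxb hbc ih =>
    obtain ⟨b₁, c₁, hb₁, hc₁, ho⟩ := phi_step huv hbc
    rcases ih with ⟨x', b₂, hx', hb₂, hT⟩ | ⟨⟨x', t, hx', ht, hT1⟩, ⟨s, b₂, hs, hb₂, hT2⟩⟩
    · rcases lft2 hne b b₂ b₁ hb₂ hb₁ with heq | ⟨hub₂, hub₁⟩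
      · exact Or.inl ⟨x', c₁, hx', hc₁, (heq ▸ hT).tail ho⟩
      · exact Or.inr ⟨⟨x', b₂, hx', hub₂, hT⟩,
          ⟨b₁, c₁, hub₁, hc₁, Relation.TransGen.single ho⟩⟩
    · rcases lft2 hne b b₂ b₁ hb₂ hb₁ with heq | ⟨hub₂, hub₁⟩
      · exact Or.inr ⟨⟨x', t, hx', ht, hT1⟩, ⟨s, c₁, hs, hc₁, (heq ▸ hT2).tail ho⟩⟩
      · exact absurd hT2 (bad_seg huv hac hQ1 hQ2 s b₂ hs hub₂)

theorem phi_acyclic (huv : G.Adj u v) {o : V → V → Bool}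
    (hac : ∀ z, ¬ Relation.TransGen (fun a b => o a b = true) z z)
    (hQ1 : ¬ Relation.ReflTransGen (fun a b => o a b = true) v u)
    (hQ2 : ¬ Relation.ReflTransGen (fun a b => o a b = true) u v) :
    ∀ z, ¬ Relation.TransGen (fun a b => phi G u v o a b = true) z z := by
  have hne : u ≠ v := huv.ne
  intro z hz
  have hlift : ∀ w, z = u → lft u v z w → lft u v u w := fun w hzu hw => hzu ▸ hw
  have hlift2 : ∀ w, z ≠ u → lft u v z w → w = z := by
    rintro w hzu (rfl | ⟨hc, -⟩)
    · rfl
    · exact absurd hc hzu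
  rcases phi_trans huv hac hQ1 hQ2 hz with ⟨z₁, z₂, hz₁, hz₂, hT⟩ |
    ⟨⟨z₁, t, hz₁, ht, hT1⟩, ⟨s, z₂, hs, hz₂, hT2⟩⟩
  · by_cases hzu : z = u
    · exact bad_seg huv hac hQ1 hQ2 z₁ z₂ (hlift z₁ hzu hz₁) (hlift z₂ hzu hz₂) hT
    · rw [hlift2 z₁ hzu hz₁, hlift2 z₂ hzu hz₂] at hT
      exact hac z hT
  · by_cases hzu : z = u
    · exact bad_seg huv hac hQ1 hQ2 z₁ t (hlift z₁ hzu hz₁) ht hT1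
    · rw [hlift2 z₁ hzu hz₁] at hT1
      rw [hlift2 z₂ hzu hz₂] at hT2
      exact bad_seg huv hac hQ1 hQ2 s t hs ht (hT2.trans hT1)

theorem phi_psi (huv : G.Adj u v) {o' : V → V → Bool}
    (ho' : IsOrientation (mergeG G u v) o') :
    phi G u v (psi G u v o') = o' := by
  have hne : u ≠ v := huv.ne
  funext a b
  by_cases hm : (mergeG G u v).Adj a b
  · obtain ⟨hab, ha, hb, hor⟩ := hm
    have hm : (mergeG G u v).Adj a b := ⟨hab, ha, hb, hor⟩
    simp only [phi]
    rw [if_pos hm]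
    by_cases hG : G.Adj a b
    · rw [if_pos hG]
      have hd : (delG G u v).Adj a b := ⟨hG, fun hc => hb hc.2, fun hc => ha hc.1⟩
      simp only [psi]
      rw [mmap_x ha, mmap_x hb, decide_eq_true hd, Bool.and_true]
    · rw [if_neg hG]
      by_cases hau : a = u
      · rw [if_pos hau]
        have hbu : b ≠ u := fun hc => hab (hau.trans hc.symm)
        have hGvb : G.Adj v b := by
          rcases hor with h | ⟨-, h⟩ | ⟨h, -⟩
          · exact absurd h hG
          · exact h
          · exact absurd h hbu
        have hd : (delG G u v).Adj v b :=
          ⟨hGvb, fun hc => huv.ne hc.1.symm, fun hc => hbu hc.2⟩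
        simp only [psi]
        rw [mmap_v, mmap_x hb, decide_eq_true hd, Bool.and_true, hau]
      · have hbu : b = u := by
          rcases hor with h | ⟨h, -⟩ | ⟨h, -⟩
          · exact absurd h hG
          · exact absurd h hau
          · exact h
        rw [if_neg hau]
        have hGav : G.Adj a v := by
          rcases hor with h | ⟨h, -⟩ | ⟨-, h⟩
          · exact absurd h hG
          · exact absurd h hau
          · exact h
        have hd : (delG G u v).Adj a v :=
          ⟨hGav, fun hc => hau hc.1, fun hc => ha hc.1⟩
        simp only [psi]
        rw [mmap_x ha, mmap_v, decide_eq_true hd, Bool.and_true, hbu]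
  · simp only [phi]
    rw [if_neg hm]
    cases hob : o' a b
    · rfl
    · exact absurd (ho'.1 a b hob) hm

theorem psi_phi (huv : G.Adj u v) {o : V → V → Bool}
    (ho : IsOrientation (delG G u v) o)
    (hac : ∀ z, ¬ Relation.TransGen (fun a b => o a b = true) z z)
    (hQ1 : ¬ Relation.ReflTransGen (fun a b => o a b = true) v u)
    (hQ2 : ¬ Relation.ReflTransGen (fun a b => o a b = true) u v) :
    psi G u v (phi G u v o) = o := by
  have hne : u ≠ v := huv.ne
  funext a b
  simp only [psi]
  by_cases hd : (delG G u v).Adj a b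
  · rw [decide_eq_true hd, Bool.and_true]
    have hm := adj_del_merge huv a b hd
    simp only [phi]
    rw [if_pos hm]
    by_cases ha : a = v
    · have hbv : b ≠ v := fun hc => hd.1.ne (ha.trans hc.symm)
      have hbu : b ≠ u := fun hc => hd.2.2 ⟨ha, hc⟩
      rw [ha, mmap_v, mmap_x hbv]
      by_cases hG : G.Adj u b
      · rw [if_pos hG]
        have hdu : (delG G u v).Adj u b := ⟨hG, fun hc => hbv hc.2, fun hc => huv.ne hc.1⟩
        have hdv : (delG G u v).Adj v b := ha ▸ hd
        cases hub : o u b <;> cases hvb : o v b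
        · rfl
        · exfalso
          have hbu2 : o b u = true := rel_of_false ho hdu (by rw [hub]; simp)
          exact hQ1 (Relation.TransGen.to_reflTransGen
            ((Relation.TransGen.single (r := fun a b => o a b = true) hvb).tail hbu2))
        · exfalso
          have hbv2 : o b v = true := rel_of_false ho hdv (by rw [hvb]; simp)
          exact hQ2 (Relation.TransGen.to_reflTransGen
            ((Relation.TransGen.single (r := fun a b => o a b = true) hub).tail hbv2))
        · rfl
      · rw [if_neg hG, if_pos rfl]
    · by_cases hb : b = v
      · have hau : a ≠ u := fun hc => hd.2.1 ⟨hc, hb⟩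
        rw [hb, mmap_v, mmap_x ha]
        by_cases hG : G.Adj a u
        · rw [if_pos hG]
          have hdu : (delG G u v).Adj a u := ⟨hG, fun hc => hau hc.1, fun hc => ha hc.1⟩
          have hdv : (delG G u v).Adj a v := hb ▸ hd
          cases hau2 : o a u <;> cases hav : o a v
          · rfl
          · exfalso
            have h1 : o u a = true := rel_of_false ho hdu (by rw [hau2]; simp)
            exact hQ2 (Relation.TransGen.to_reflTransGen
              ((Relation.TransGen.single (r := fun a b => o a b = true) h1).tail hav))
          · exfalso
            have h1 : o v a = true := rel_of_false ho hdv (by rw [hav]; simp)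
            exact hQ1 (Relation.TransGen.to_reflTransGen
              ((Relation.TransGen.single (r := fun a b => o a b = true) h1).tail hau2))
          · rfl
        · rw [if_neg hG, if_neg hau]
      · rw [mmap_x ha, mmap_x hb, if_pos hd.1]
  · rw [decide_eq_false hd, Bool.and_false]
    cases hob : o a b
    · rfl
    · exact absurd (ho.1 a b hob) hd

noncomputable def E2 (huv : G.Adj u v) :
    {o' : V → V → Bool // IsAcyclicOrientation (mergeG G u v) o'} ≃
      {o : V → V → Bool // IsAcyclicOrientation (delG G u v) o ∧
        ¬ Relation.ReflTransGen (fun a b => o a b = true) v u ∧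
        ¬ Relation.ReflTransGen (fun a b => o a b = true) u v} where
  toFun o' := ⟨psi G u v o'.1, ⟨⟨psi_orientation huv o'.2.1, psi_acyclic huv o'.2.2⟩,
    psi_cond huv o'.2.2 mmap_v (mmap_u huv.ne) huv.ne.symm,
    psi_cond huv o'.2.2 (mmap_u huv.ne) mmap_v huv.ne⟩⟩
  invFun o := ⟨phi G u v o.1,
    ⟨phi_orientation huv o.2.1.1, phi_acyclic huv o.2.1.2 o.2.2.1 o.2.2.2⟩⟩
  left_inv o' := Subtype.ext (phi_psi huv o'.2.1)
  right_inv o := Subtype.ext (psi_phi huv o.2.1.1 o.2.1.2 o.2.2.1 o.2.2.2)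

theorem ac_rec (huv : G.Adj u v) : ac G = ac (delG G u v) + ac (mergeG G u v) := by
  classical
  have hne : u ≠ v := huv.ne
  rw [ac, Fintype.card_congr (E1 huv), Fintype.card_sum]
  have h2 : ac (mergeG G u v) =
      Fintype.card {o : V → V → Bool // IsAcyclicOrientation (delG G u v) o ∧
        ¬ Relation.ReflTransGen (fun a b => o a b = true) v u ∧
        ¬ Relation.ReflTransGen (fun a b => o a b = true) u v} := by
    rw [ac, Fintype.card_congr (E2 huv)]
  rw [h2, ac]
  rw [Fintype.card_subtype, Fintype.card_subtype, Fintype.card_subtype, Fintype.card_subtype]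
  have hu : (Finset.univ.filter (fun o : V → V → Bool =>
        IsAcyclicOrientation (delG G u v) o ∧
          ¬ Relation.ReflTransGen (fun a b => o a b = true) v u)) ∪
      (Finset.univ.filter (fun o : V → V → Bool =>
        IsAcyclicOrientation (delG G u v) o ∧
          ¬ Relation.ReflTransGen (fun a b => o a b = true) u v)) =
      Finset.univ.filter (fun o : V → V → Bool => IsAcyclicOrientation (delG G u v) o) := by
    rw [← Finset.filter_or]
    apply Finset.filter_congr
    intro o _
    constructor
    · rintro (⟨h, -⟩ | ⟨h, -⟩) <;> exact h
    · intro hP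
      by_cases hq : Relation.ReflTransGen (fun a b => o a b = true) v u
      · right
        refine ⟨hP, fun hr => ?_⟩
        rcases Relation.reflTransGen_iff_eq_or_transGen.1 hq with he | ht
        · exact hne he
        · rcases Relation.reflTransGen_iff_eq_or_transGen.1 hr with he | ht2
          · exact hne he.symm
          · exact hP.2 u (ht2.trans ht)
      · exact Or.inl ⟨hP, hq⟩
  have hi : (Finset.univ.filter (fun o : V → V → Bool =>
        IsAcyclicOrientation (delG G u v) o ∧
          ¬ Relation.ReflTransGen (fun a b => o a b = true) v u)) ∩
      (Finset.univ.filter (fun o : V → V → Bool =>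
        IsAcyclicOrientation (delG G u v) o ∧
          ¬ Relation.ReflTransGen (fun a b => o a b = true) u v)) =
      Finset.univ.filter (fun o : V → V → Bool =>
        IsAcyclicOrientation (delG G u v) o ∧
          ¬ Relation.ReflTransGen (fun a b => o a b = true) v u ∧
          ¬ Relation.ReflTransGen (fun a b => o a b = true) u v) := by
    rw [← Finset.filter_and]
    apply Finset.filter_congr
    intro o _
    tauto
  have hcard := Finset.card_union_add_card_inter
    (Finset.univ.filter (fun o : V → V → Bool =>
        IsAcyclicOrientation (delG G u v) o ∧
          ¬ Relation.ReflTransGen (fun a b => o a b = true) v u))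
    (Finset.univ.filter (fun o : V → V → Bool =>
        IsAcyclicOrientation (delG G u v) o ∧
          ¬ Relation.ReflTransGen (fun a b => o a b = true) u v))
  rw [hu, hi] at hcard
  exact hcard.symm


noncomputable def pc (G : SimpleGraph V) (n : ℕ) : ℕ :=
  Fintype.card {κ : V → Fin n // ∀ u v, G.Adj u v → κ u ≠ κ v}

theorem pc_del (huv : G.Adj u v) (n : ℕ) :
    pc (delG G u v) n =
      pc G n + Fintype.card {κ : V → Fin n //
        (∀ a b, (delG G u v).Adj a b → κ a ≠ κ b) ∧ κ u = κ v} := by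
  have keyiff : ∀ κ : V → Fin n,
      ((∀ a b, (delG G u v).Adj a b → κ a ≠ κ b) ∧ ¬ κ u = κ v) ↔
        (∀ a b, G.Adj a b → κ a ≠ κ b) := by
    intro κ
    constructor
    · rintro ⟨hd, hne⟩ a b hab
      by_cases h1 : a = u ∧ b = v
      · rw [h1.1, h1.2]; exact hne
      by_cases h2 : a = v ∧ b = u
      · rw [h2.1, h2.2]; exact fun h => hne h.symm
      · exact hd a b ⟨hab, h1, h2⟩
    · intro hG
      exact ⟨fun a b hab => hG a b hab.1, hG u v huv⟩
  rw [pc, pc, Fintype.card_subtype, Fintype.card_subtype, Fintype.card_subtype]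
  have hsplit := Finset.card_filter_add_card_filter_not
    (s := Finset.univ.filter (fun κ : V → Fin n => ∀ a b, (delG G u v).Adj a b → κ a ≠ κ b))
    (p := fun κ => κ u = κ v)
  rw [Finset.filter_filter, Finset.filter_filter] at hsplit
  have h2 : Finset.univ.filter (fun κ : V → Fin n => ∀ a b, G.Adj a b → κ a ≠ κ b) =
      Finset.univ.filter (fun κ : V → Fin n =>
        (∀ a b, (delG G u v).Adj a b → κ a ≠ κ b) ∧ ¬ κ u = κ v) := by
    apply Finset.filter_congr
    intro κ _
    exact (keyiff κ).symm
  rw [h2, ← hsplit, Nat.add_comm]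

theorem pc_merge (huv : G.Adj u v) (n : ℕ) :
    pc (mergeG G u v) n =
      n * Fintype.card {κ : V → Fin n //
        (∀ a b, (delG G u v).Adj a b → κ a ≠ κ b) ∧ κ u = κ v} := by
  classical
  have hne : u ≠ v := huv.ne
  let f : V → V := fun x => if x = v then u else x
  have hfv : f v = u := if_pos rfl
  have hfu : f u = u := by
    show (if u = v then u else u) = u
    split <;> rfl
  have hfx : ∀ x, x ≠ v → f x = x := fun x hx => if_neg hx
  have adj_del_merge : ∀ a b, (delG G u v).Adj a b → (mergeG G u v).Adj (f a) (f b) := by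
    rintro a b ⟨hab, h1, h2⟩
    by_cases ha : a = v
    · have hbv : b ≠ v := fun hb' => hab.ne (ha.trans hb'.symm)
      have hbu : b ≠ u := fun h => h2 ⟨ha, h⟩
      rw [ha, hfv, hfx b hbv]
      exact ⟨fun h => hbu h.symm, hne, hbv, Or.inr (Or.inl ⟨rfl, ha ▸ hab⟩)⟩
    · by_cases hb : b = v
      · have hau : a ≠ u := fun h => h1 ⟨h, hb⟩
        rw [hb, hfv, hfx a ha]
        exact ⟨hau, ha, hne, Or.inr (Or.inr ⟨rfl, hb ▸ hab⟩)⟩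
      · rw [hfx a ha, hfx b hb]
        exact ⟨hab.ne, ha, hb, Or.inl hab⟩
  have E : {κ : V → Fin n // ∀ a b, (mergeG G u v).Adj a b → κ a ≠ κ b} ≃
      ({κ : V → Fin n // (∀ a b, (delG G u v).Adj a b → κ a ≠ κ b) ∧ κ u = κ v} × Fin n) := by
    refine
      { toFun := fun κ => (⟨fun x => κ.1 (f x), ?_, ?_⟩, κ.1 v)
        invFun := fun p => ⟨Function.update p.1.1 v p.2, ?_⟩
        left_inv := ?_
        right_inv := ?_ }
    · intro a b hab
      exact κ.2 (f a) (f b) (adj_del_merge a b hab)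
    · show κ.1 (f u) = κ.1 (f v)
      rw [hfu, hfv]
    · rintro a b ⟨hab, ha, hb, hor⟩
      have ka : Function.update p.1.1 v p.2 a = p.1.1 a := Function.update_of_ne ha _ _
      have kb : Function.update p.1.1 v p.2 b = p.1.1 b := Function.update_of_ne hb _ _
      rw [ka, kb]
      obtain ⟨hprop, hequ⟩ := p.1.2
      rcases hor with h | ⟨hau, h⟩ | ⟨hbu, h⟩
      · exact hprop a b ⟨h, fun hc => hb hc.2, fun hc => ha hc.1⟩
      · have hd : (delG G u v).Adj v b :=
          ⟨h, fun hc => hne hc.1.symm, fun hc => hab (hau.trans hc.2.symm)⟩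
        rw [hau, hequ]
        exact hprop v b hd
      · have hd : (delG G u v).Adj a v :=
          ⟨h, fun hc => hab (hc.1.trans hbu.symm), fun hc => ha hc.1⟩
        rw [hbu, hequ]
        exact hprop a v hd
    · intro κ
      apply Subtype.ext
      funext x
      by_cases hx : x = v
      · rw [hx]
        show Function.update (fun y => κ.1 (f y)) v (κ.1 v) v = κ.1 v
        exact Function.update_self _ _ _
      · show Function.update (fun y => κ.1 (f y)) v (κ.1 v) x = κ.1 x
        rw [Function.update_of_ne hx]
        show κ.1 (f x) = κ.1 x
        rw [hfx x hx]
    · rintro ⟨⟨lam, hlam⟩, c⟩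
      have h1 : ∀ x, Function.update lam v c (f x) = lam x := by
        intro x
        by_cases hx : x = v
        · rw [hx, hfv, Function.update_of_ne hne, hlam.2]
        · rw [hfx x hx, Function.update_of_ne hx]
      refine Prod.ext (Subtype.ext (funext h1)) ?_
      show Function.update lam v c v = c
      exact Function.update_self _ _ _
  show Fintype.card {κ : V → Fin n // ∀ a b, (mergeG G u v).Adj a b → κ a ≠ κ b} = _
  rw [Fintype.card_congr E, Fintype.card_prod, Fintype.card_fin, mul_comm]

theorem pc_bot (h : ∀ a b, ¬ G.Adj a b) (n : ℕ) : pc G n = n ^ Fintype.card V := by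
  rw [pc, Fintype.card_congr (Equiv.subtypeUnivEquiv
    (fun κ a b hab => absurd hab (h a b))), Fintype.card_fun, Fintype.card_fin]


noncomputable local instance (G : SimpleGraph V) :
    Fintype G.ConnectedComponent := Fintype.ofFinite _

theorem del_le : delG G u v ≤ G := fun _ _ hab => hab.1

theorem card_del (huv : G.Adj u v) :
    (delG G u v).edgeFinset.card < G.edgeFinset.card := by
  apply Finset.card_lt_card
  rw [Finset.ssubset_iff_of_subset (SimpleGraph.edgeFinset_subset_edgeFinset.2 del_le)]
  refine ⟨s(u, v), ?_, ?_⟩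
  · rw [SimpleGraph.mem_edgeFinset, SimpleGraph.mem_edgeSet]; exact huv
  · rw [SimpleGraph.mem_edgeFinset, SimpleGraph.mem_edgeSet]
    rintro ⟨-, h1, -⟩
    exact h1 ⟨rfl, rfl⟩

theorem card_merge (huv : G.Adj u v) :
    (mergeG G u v).edgeFinset.card < G.edgeFinset.card := by
  classical
  have hne : u ≠ v := huv.ne
  set g : V → V := fun x => if x = u then v else x with hg
  have hgu : g u = v := if_pos rfl
  have hgx : ∀ x, x ≠ u → g x = x := fun x hx => if_neg hx
  set ψ : Sym2 V → Sym2 V := fun e => if e ∈ G.edgeSet then e else Sym2.map g e with hψ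
  have hmem : s(u, v) ∈ G.edgeFinset := by
    rw [SimpleGraph.mem_edgeFinset, SimpleGraph.mem_edgeSet]; exact huv
  refine lt_of_le_of_lt (Finset.card_le_card_of_injOn ψ ?_ ?_)
    (Finset.card_erase_lt_of_mem hmem)
  · intro e he
    induction e using Sym2.ind with
    | _ a b =>
      rw [Finset.mem_coe, SimpleGraph.mem_edgeFinset, SimpleGraph.mem_edgeSet] at he
      rw [Finset.mem_coe]
      obtain ⟨hab, ha, hb, hor⟩ := he
      by_cases hG : s(a, b) ∈ G.edgeSet
      · rw [hψ]
        simp only [if_pos hG]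
        rw [Finset.mem_erase, SimpleGraph.mem_edgeFinset]
        refine ⟨?_, hG⟩
        intro hc
        rcases Sym2.eq_iff.1 hc with ⟨h1, h2⟩ | ⟨h1, h2⟩
        · exact hb h2
        · exact ha h1
      · have hGadj : ¬ G.Adj a b := fun h => hG ((SimpleGraph.mem_edgeSet _).2 h)
        rcases hor with h | ⟨hau, h⟩ | ⟨hbu, h⟩
        · exact absurd h hGadj
        · have hbu' : b ≠ u := fun hc => hab (hau.trans hc.symm)
          rw [hψ]
          simp only [if_neg hG, Sym2.map_pair_eq]
          rw [hau, hgu, hgx b hbu']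
          rw [Finset.mem_erase, SimpleGraph.mem_edgeFinset, SimpleGraph.mem_edgeSet]
          refine ⟨?_, h⟩
          intro hc
          rcases Sym2.eq_iff.1 hc with ⟨h1, h2⟩ | ⟨h1, h2⟩
          · exact hne h1.symm
          · exact hbu' h2
        · have hau' : a ≠ u := fun hc => hab (hc.trans hbu.symm)
          rw [hψ]
          simp only [if_neg hG, Sym2.map_pair_eq]
          rw [hbu, hgu, hgx a hau']
          rw [Finset.mem_erase, SimpleGraph.mem_edgeFinset, SimpleGraph.mem_edgeSet]
          refine ⟨?_, h⟩
          intro hc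
          rcases Sym2.eq_iff.1 hc with ⟨h1, h2⟩ | ⟨h1, h2⟩
          · exact hau' h1
          · exact hne h2.symm
  · intro e1 he1 e2 he2 heq
    induction e1 using Sym2.ind with
    | _ a b =>
    induction e2 using Sym2.ind with
    | _ c d =>
      rw [Finset.mem_coe, SimpleGraph.mem_edgeFinset, SimpleGraph.mem_edgeSet] at he1 he2
      obtain ⟨hab, ha, hb, hor1⟩ := he1
      obtain ⟨hcd, hc, hd, hor2⟩ := he2
      have ginj : ∀ x y : V, x ≠ v → y ≠ v → g x = g y → x = y := by
        intro x y hx hy hxy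
        by_cases hxu : x = u
        · by_cases hyu : y = u
          · exact hxu.trans hyu.symm
          · rw [hxu, hgu, hgx y hyu] at hxy; exact absurd hxy.symm hy
        · by_cases hyu : y = u
          · rw [hyu, hgu, hgx x hxu] at hxy; exact absurd hxy hx
          · rw [hgx x hxu, hgx y hyu] at hxy; exact hxy
      have hvmap : ∀ x y : V, ¬ G.Adj x y → (x = u ∨ y = u) → v ∈ Sym2.map g s(x, y) := by
        intro x y hxy hor
        rw [Sym2.map_pair_eq, Sym2.mem_iff]
        rcases hor with h | h
        · left; rw [h, hgu]
        · right; rw [h, hgu]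
      have hnotu1 : ¬ G.Adj a b → (a = u ∨ b = u) := by
        intro hG; rcases hor1 with h | ⟨h, -⟩ | ⟨h, -⟩
        · exact absurd h hG
        · exact Or.inl h
        · exact Or.inr h
      have hnotu2 : ¬ G.Adj c d → (c = u ∨ d = u) := by
        intro hG; rcases hor2 with h | ⟨h, -⟩ | ⟨h, -⟩
        · exact absurd h hG
        · exact Or.inl h
        · exact Or.inr h
      rw [hψ] at heq
      simp only at heq
      by_cases h1 : s(a, b) ∈ G.edgeSet <;> by_cases h2 : s(c, d) ∈ G.edgeSet
      · rw [if_pos h1, if_pos h2] at heq; exact heq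
      · rw [if_pos h1, if_neg h2] at heq
        exfalso
        have hv2 : v ∈ Sym2.map g s(c, d) :=
          hvmap c d (fun h => h2 ((SimpleGraph.mem_edgeSet _).2 h)) (hnotu2 (fun h => h2 ((SimpleGraph.mem_edgeSet _).2 h)))
        rw [← heq, Sym2.mem_iff] at hv2
        rcases hv2 with h | h
        · exact ha h.symm
        · exact hb h.symm
      · rw [if_neg h1, if_pos h2] at heq
        exfalso
        have hv2 : v ∈ Sym2.map g s(a, b) :=
          hvmap a b (fun h => h1 ((SimpleGraph.mem_edgeSet _).2 h)) (hnotu1 (fun h => h1 ((SimpleGraph.mem_edgeSet _).2 h)))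
        rw [heq, Sym2.mem_iff] at hv2
        rcases hv2 with h | h
        · exact hc h.symm
        · exact hd h.symm
      · rw [if_neg h1, if_neg h2, Sym2.map_pair_eq, Sym2.map_pair_eq] at heq
        rcases Sym2.eq_iff.1 heq with ⟨hh1, hh2⟩ | ⟨hh1, hh2⟩
        · rw [ginj a c ha hc hh1, ginj b d hb hd hh2]
        · rw [ginj a d ha hd hh1, ginj b c hb hc hh2, Sym2.eq_swap]

theorem comp_le_card (G : SimpleGraph V) :
    Fintype.card G.ConnectedComponent ≤ Fintype.card V :=
  Fintype.card_le_of_surjective G.connectedComponentMk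
    (fun c => c.exists_rep)

theorem comp_del (huv : G.Adj u v) :
    Fintype.card G.ConnectedComponent ≤ Fintype.card (delG G u v).ConnectedComponent := by
  apply Fintype.card_le_of_surjective
    (SimpleGraph.ConnectedComponent.lift (fun x => G.connectedComponentMk x)
      (fun a b p _ => SimpleGraph.ConnectedComponent.sound ⟨p.mapLe del_le⟩))
  intro c
  obtain ⟨x, rfl⟩ := c.exists_rep
  exact ⟨(delG G u v).connectedComponentMk x, SimpleGraph.ConnectedComponent.lift_mk⟩

theorem comp_merge (huv : G.Adj u v) :
    Fintype.card G.ConnectedComponent + 1 ≤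
      Fintype.card (mergeG G u v).ConnectedComponent := by
  classical
  have hne : u ≠ v := huv.ne
  have hadj : ∀ a b, (mergeG G u v).Adj a b → G.Reachable a b := by
    rintro a b ⟨hab, ha, hb, hor⟩
    rcases hor with h | ⟨hau, h⟩ | ⟨hbu, h⟩
    · exact h.reachable
    · rw [hau]; exact huv.reachable.trans h.reachable
    · rw [hbu]; exact h.reachable.trans huv.symm.reachable
  have wk : ∀ {x y : V}, (mergeG G u v).Walk x y → G.Reachable x y := by
    intro x y p
    induction p with
    | nil => exact SimpleGraph.Reachable.refl _
    | cons h p ih => exact (hadj _ _ h).trans ih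
  set push : (mergeG G u v).ConnectedComponent → G.ConnectedComponent :=
    SimpleGraph.ConnectedComponent.lift (fun x => G.connectedComponentMk x)
      (fun a b p _ => SimpleGraph.ConnectedComponent.sound (wk p)) with hpush
  have hiso : ∀ z, (mergeG G u v).Reachable v z → v = z := by
    intro z hr
    obtain ⟨w⟩ := hr
    cases w with
    | nil => rfl
    | cons h _ => exact absurd rfl h.2.1
  set F : (mergeG G u v).ConnectedComponent → G.ConnectedComponent ⊕ Unit :=
    fun c => if c = (mergeG G u v).connectedComponentMk v then Sum.inr () else Sum.inl (push c)
    with hF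
  have hsurj : Function.Surjective F := by
    rintro (d | ⟨⟩)
    · obtain ⟨x, rfl⟩ := d.exists_rep
      by_cases hx : x = v
      · refine ⟨(mergeG G u v).connectedComponentMk u, ?_⟩
        have hnc : (mergeG G u v).connectedComponentMk u ≠ (mergeG G u v).connectedComponentMk v := by
          intro hcon
          exact hne ((hiso u (SimpleGraph.ConnectedComponent.exact hcon).symm)).symm
        rw [hF]
        simp only [if_neg hnc]
        rw [hpush, SimpleGraph.ConnectedComponent.lift_mk]
        rw [hx]
        exact congrArg Sum.inl (SimpleGraph.ConnectedComponent.sound huv.reachable)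
      · refine ⟨(mergeG G u v).connectedComponentMk x, ?_⟩
        have hnc : (mergeG G u v).connectedComponentMk x ≠ (mergeG G u v).connectedComponentMk v := by
          intro hcon
          exact hx ((hiso x (SimpleGraph.ConnectedComponent.exact hcon).symm)).symm
        rw [hF]
        simp only [if_neg hnc]
        rw [hpush, SimpleGraph.ConnectedComponent.lift_mk]
        rfl
    · exact ⟨(mergeG G u v).connectedComponentMk v, by rw [hF]; simp⟩
  have := Fintype.card_le_of_surjective F hsurj
  rwa [Fintype.card_sum, Fintype.card_unit] at this


-- new material starts here
theorem ac_bot (h : ∀ a b, ¬ G.Adj a b) : ac G = 1 := by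
  rw [ac, Fintype.card_eq_one_iff]
  refine ⟨⟨fun _ _ => false, ⟨⟨fun a b hab => absurd hab (by simp),
    fun a b hab => absurd hab (h a b)⟩, ?_⟩⟩, ?_⟩
  · intro z hz
    obtain ⟨b, hb, -⟩ := Relation.TransGen.head'_iff.1 hz
    exact absurd hb (by simp)
  · rintro ⟨o, ⟨ho1, -⟩, -⟩
    apply Subtype.ext
    funext a b
    show o a b = false
    cases hab : o a b
    · rfl
    · exact absurd (ho1 a b hab) (h a b)

theorem base (h : ∀ a b, ¬ G.Adj a b) :
    ∃ p : Polynomial ℤ, (∀ n : ℕ, 1 ≤ n → p.eval (n : ℤ) = pc G n) ∧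
      (Polynomial.X : Polynomial ℤ) ^ (Fintype.card G.ConnectedComponent) ∣ p ∧
      p.eval (-1) = (-1) ^ Fintype.card V * ac G := by
  refine ⟨Polynomial.X ^ (Fintype.card V), ?_, ?_, ?_⟩
  · intro n hn
    rw [Polynomial.eval_pow, Polynomial.eval_X, pc_bot h n, Nat.cast_pow]
  · exact pow_dvd_pow _ (comp_le_card G)
  · rw [Polynomial.eval_pow, Polynomial.eval_X, ac_bot h]
    simp

theorem key (N : ℕ) : ∀ G : SimpleGraph V, G.edgeFinset.card ≤ N →
    ∃ p : Polynomial ℤ, (∀ n : ℕ, 1 ≤ n → p.eval (n : ℤ) = pc G n) ∧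
      (Polynomial.X : Polynomial ℤ) ^ (Fintype.card G.ConnectedComponent) ∣ p ∧
      p.eval (-1) = (-1) ^ Fintype.card V * ac G := by
  induction N with
  | zero =>
    intro G hG
    apply base
    intro a b hab
    have hm : s(a, b) ∈ G.edgeFinset := by
      rw [SimpleGraph.mem_edgeFinset, SimpleGraph.mem_edgeSet]
      exact hab
    have := Finset.card_eq_zero.1 (Nat.le_zero.1 hG)
    rw [this] at hm
    exact absurd hm (Finset.notMem_empty _)
  | succ N ih =>
    intro G hG
    by_cases hE : ∃ a b, G.Adj a b
    · obtain ⟨u, v, huv⟩ := hE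
      obtain ⟨pd, hpd1, hpd2, hpd3⟩ := ih (delG G u v)
        (by have := card_del huv; omega)
      obtain ⟨pm, hpm1, hpm2, hpm3⟩ := ih (mergeG G u v)
        (by have := card_merge huv; omega)
      set t := Fintype.card G.ConnectedComponent with ht
      have hdvd : (Polynomial.X : Polynomial ℤ) ^ (t + 1) ∣ pm :=
        dvd_trans (pow_dvd_pow _ (comp_merge huv)) hpm2
      obtain ⟨s, hs⟩ := hdvd
      refine ⟨pd - Polynomial.X ^ t * s, ?_, ?_, ?_⟩
      · intro n hn
        have hn0 : (n : ℤ) ≠ 0 := Int.natCast_ne_zero.2 (by omega)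
        have hcount : (n : ℤ) * (pc G n : ℤ) =
            n * (pc (delG G u v) n : ℤ) - (pc (mergeG G u v) n : ℤ) := by
          rw [pc_del huv n, pc_merge huv n]
          push_cast
          ring
        have hevm : pm.eval (n : ℤ) = (n : ℤ) ^ (t + 1) * s.eval (n : ℤ) := by
          rw [hs, Polynomial.eval_mul, Polynomial.eval_pow, Polynomial.eval_X]
        rw [Polynomial.eval_sub, Polynomial.eval_mul, Polynomial.eval_pow, Polynomial.eval_X,
          hpd1 n hn]
        apply mul_left_cancel₀ hn0
        have hrw : (n : ℤ) * ((n : ℤ) ^ t * s.eval (n : ℤ)) = pm.eval (n : ℤ) := by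
          rw [hevm]; ring
        rw [mul_sub, hrw, hpm1 n hn, hcount]
      · exact dvd_sub (dvd_trans (pow_dvd_pow _ (comp_del huv)) hpd2) (dvd_mul_right _ _)
      · rw [Polynomial.eval_sub, Polynomial.eval_mul, Polynomial.eval_pow, Polynomial.eval_X,
          hpd3]
        have hm : pm.eval (-1) = (-1) ^ (t + 1) * s.eval (-1) := by
          rw [hs, Polynomial.eval_mul, Polynomial.eval_pow, Polynomial.eval_X]
        rw [hpm3] at hm
        have hs1 : ((-1 : ℤ)) ^ t * s.eval (-1) =
            -((-1) ^ Fintype.card V * (ac (mergeG G u v) : ℤ)) := by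
          have : ((-1 : ℤ)) ^ (t + 1) = -(-1) ^ t := by ring
          rw [this] at hm
          linarith [hm]
        rw [hs1, ac_rec huv]
        push_cast
        ring
    · push_neg at hE
      exact base hE


end StanleyAux

/-- **Stanley's acyclic orientation theorem**: if `p` is the chromatic polynomial of
a finite simple graph `G` on `k` vertices (i.e. `p(n)` counts proper colourings with
`n` colours for every natural number `n`), then `p(-1) = (-1)^k ⋅ a(G)`, where
`a(G)` is the number of acyclic orientations of `G`. -/
theorem stanley_acyclic_orientations {V : Type} [Fintype V] (G : SimpleGraph V)
    (p : Polynomial ℤ)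
    (hp : ∀ n : ℕ, p.eval (n : ℤ) =
      (Fintype.card {κ : V → Fin n // ∀ u v, G.Adj u v → κ u ≠ κ v} : ℤ)) :
    p.eval (-1) =
      (-1) ^ Fintype.card V *
        (Fintype.card {o : V → V → Bool // IsAcyclicOrientation G o} : ℤ) := by
  obtain ⟨q, hq1, -, hq3⟩ := StanleyAux.key G.edgeFinset.card G le_rfl
  have hpq : p = q := by
    apply Polynomial.eq_of_infinite_eval_eq
    apply Set.infinite_of_injective_forall_mem
      (f := fun n : ℕ => ((n + 1 : ℕ) : ℤ))
    · intro a b hab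
      simpa using hab
    · intro n
      show p.eval _ = q.eval _
      rw [hp (n+1), hq1 (n+1) (by omega)]
      rfl
  rw [hpq, hq3]
  rfl
end
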